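/- arXiv:2410.21201 — 5 statements merged into one kernel-verified Lean document; each statement's English description precedes it below -/
import Mathlib

section
/- Let |φ⟩, |ψ⟩ be unit vectors with |⟨φ|ψ⟩| ≠ 1, let R_φ = I − 2|φ⟩⟨φ| and R_ψ = I − 2|ψ⟩⟨ψ| be the Householder reflections, let γ = arcsin(|⟨φ|ψ⟩|), θ = arg(⟨φ|ψ⟩), θ⊥ = arg(⟨φ⊥|ψ⟩) where |φ⊥⟩ = (|ψ⟩ − ⟨φ|ψ⟩|φ⟩)/‖|ψ⟩ − ⟨φ|ψ⟩|φ⟩‖. Then the unit vectors |Φ±⟩ = (1/√2)(|φ⟩ ± e^{i(θ⊥−θ+π/2)}|φ⊥⟩) satisfy R_φ R_ψ |Φ±⟩ = e^{i(π ∓ 2γ)}|Φ±⟩. -/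
open scoped InnerProductSpace

/-- The Householder reflection about a unit vector `v`: `x ↦ x - 2⟨v,x⟩v`. -/
noncomputable def householder {d : ℕ} (v x : EuclideanSpace ℂ (Fin d)) :
    EuclideanSpace ℂ (Fin d) :=
  x - (2 : ℂ) • ⟪v, x⟫_ℂ • v

/-- Eigenvectors of the product of two Householder reflections. -/
theorem householder_product_eigenvectors {d : ℕ}
    (φ ψ : EuclideanSpace ℂ (Fin d)) (hφ : ‖φ‖ = 1) (hψ : ‖ψ‖ = 1)
    (h : ‖⟪φ, ψ⟫_ℂ‖ ≠ 1)
    (φp : EuclideanSpace ℂ (Fin d))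
    (hφp : φp = ‖ψ - ⟪φ, ψ⟫_ℂ • φ‖⁻¹ • (ψ - ⟪φ, ψ⟫_ℂ • φ))
    (γ θ θp : ℝ)
    (hγ : γ = Real.arcsin ‖⟪φ, ψ⟫_ℂ‖)
    (hθ : θ = (⟪φ, ψ⟫_ℂ).arg) (hθp : θp = (⟪φp, ψ⟫_ℂ).arg)
    (Φplus Φminus : EuclideanSpace ℂ (Fin d))
    (hΦplus : Φplus = (Real.sqrt 2)⁻¹ •
      (φ + Complex.exp (Complex.I * (θp - θ + Real.pi / 2 : ℝ)) • φp))
    (hΦminus : Φminus = (Real.sqrt 2)⁻¹ •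
      (φ - Complex.exp (Complex.I * (θp - θ + Real.pi / 2 : ℝ)) • φp)) :
    ‖Φplus‖ = 1 ∧ ‖Φminus‖ = 1 ∧
    householder φ (householder ψ Φplus) =
      Complex.exp (Complex.I * (Real.pi - 2 * γ : ℝ)) • Φplus ∧
    householder φ (householder ψ Φminus) =
      Complex.exp (Complex.I * (Real.pi + 2 * γ : ℝ)) • Φminus := by
  set c := ⟪φ, ψ⟫_ℂ with hc
  have hφφ : ⟪φ, φ⟫_ℂ = 1 := by rw [inner_self_eq_norm_sq_to_K, hφ]; norm_num
  have hψψ : ⟪ψ, ψ⟫_ℂ = 1 := by rw [inner_self_eq_norm_sq_to_K, hψ]; norm_num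
  set s : ℝ := ‖c‖ with hs
  have hs0 : 0 ≤ s := norm_nonneg _
  have hs1 : s < 1 := by
    refine lt_of_le_of_ne ?_ h
    calc s ≤ ‖φ‖ * ‖ψ‖ := norm_inner_le_norm _ _
    _ = 1 := by rw [hφ, hψ]; ring
  set u := ψ - c • φ with hu
  have hcc : (starRingEnd ℂ) c * c = ((s^2 : ℝ) : ℂ) := by
    rw [Complex.conj_mul']; norm_cast
  have hψφ : ⟪ψ, φ⟫_ℂ = (starRingEnd ℂ) c := by rw [← inner_conj_symm]
  have huu : ⟪u, u⟫_ℂ = ((1 - s^2 : ℝ) : ℂ) := by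
    simp only [hu, inner_sub_left, inner_sub_right, inner_smul_left, inner_smul_right,
      hφφ, hψψ, hψφ, ← hc, mul_one]
    rw [hcc]; push_cast; ring
  set t : ℝ := ‖u‖ with ht
  have ht2 : t^2 = 1 - s^2 := by
    have := norm_sq_eq_re_inner (𝕜 := ℂ) u
    rw [huu, ← ht] at this; exact this
  have htn : 0 ≤ t := norm_nonneg _
  have ht0 : 0 < t := by nlinarith
  have htC : ((t:ℂ)) ≠ 0 := by exact_mod_cast ht0.ne'
  have hφp' : φp = (t : ℝ)⁻¹ • u := hφp
  have hup : u = (t : ℝ) • φp := by rw [hφp', smul_inv_smul₀ ht0.ne']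
  have hψ_eq : ψ = c • φ + (t : ℂ) • φp := by
    have : ψ = c • φ + u := by rw [hu]; abel
    rw [this, hup, Complex.coe_smul]
  have hφu : ⟪φ, u⟫_ℂ = 0 := by
    simp [hu, inner_sub_right, inner_smul_right, hφφ, ← hc, hφ]
  have hφp0 : ⟪φ, φp⟫_ℂ = 0 := by
    rw [hφp', ← Complex.coe_smul, inner_smul_right, hφu, mul_zero]
  have hpφ0 : ⟪φp, φ⟫_ℂ = 0 := by rw [← inner_conj_symm, hφp0, map_zero]
  have hpp : ⟪φp, φp⟫_ℂ = 1 := by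
    rw [hφp', ← Complex.coe_smul, inner_smul_right, inner_smul_left, huu]
    rw [Complex.conj_ofReal, ← ht2]
    push_cast
    field_simp
  have huψ : ⟪u, ψ⟫_ℂ = ((1 - s^2 : ℝ) : ℂ) := by
    simp only [hu, inner_sub_left, inner_smul_left, hψψ, ← hc, hcc]
    push_cast; ring
  have hpψ : ⟪φp, ψ⟫_ℂ = (t : ℂ) := by
    rw [hφp', ← Complex.coe_smul, inner_smul_left, huψ, Complex.conj_ofReal, ← ht2]
    push_cast
    field_simp
  have hψp : ⟪ψ, φp⟫_ℂ = (t : ℂ) := by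
    rw [← inner_conj_symm, hpψ, Complex.conj_ofReal]
  have hθp0 : θp = 0 := by
    rw [hθp, hpψ]
    exact Complex.arg_ofReal_of_nonneg htn
  have hsin : Real.sin γ = s := by
    rw [hγ]; exact Real.sin_arcsin (by linarith) hs1.le
  have hcos : Real.cos γ = t := by
    rw [hγ, Real.cos_arcsin, ← ht2, Real.sqrt_sq htn]
  set A := Complex.exp (Complex.I * (θ:ℂ)) with hA
  set B := Complex.exp (-(Complex.I * (θ:ℂ))) with hB
  have hAB : A * B = 1 := by rw [hA, hB, ← Complex.exp_add]; simp
  have hcA : c = (s:ℂ) * A := by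
    conv_lhs => rw [← Complex.norm_mul_exp_arg_mul_I c]
    rw [hA, ← hθ, hs, mul_comm Complex.I ((θ:ℝ):ℂ)]
  have hAconj : (starRingEnd ℂ) A = B := by
    rw [hA, hB, ← Complex.exp_conj]
    congr 1
    simp [Complex.conj_ofReal]
  have hBconj : (starRingEnd ℂ) B = A := by rw [← hAconj, Complex.conj_conj]
  have hcconj : (starRingEnd ℂ) c = (s:ℂ) * B := by
    rw [hcA, map_mul, Complex.conj_ofReal, hAconj]
  have hE : Complex.exp (Complex.I * ((θp - θ + Real.pi/2 : ℝ) : ℂ)) = Complex.I * B := by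
    rw [hθp0, hB]
    have h1 : Complex.I * ((0 - θ + Real.pi/2 : ℝ) : ℂ)
        = ((Real.pi/2 : ℝ) : ℂ) * Complex.I + -(Complex.I * (θ:ℂ)) := by push_cast; ring
    rw [h1, Complex.exp_add]
    congr 1
    rw [Complex.exp_mul_I, ← Complex.ofReal_cos, ← Complex.ofReal_sin,
      Real.cos_pi_div_two, Real.sin_pi_div_two]
    simp
  have hrc1 : Real.cos (Real.pi - 2*γ) = s^2 - t^2 := by
    rw [Real.cos_pi_sub, Real.cos_two_mul', hsin, hcos]; ring
  have hrs1 : Real.sin (Real.pi - 2*γ) = 2*s*t := by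
    rw [Real.sin_pi_sub, Real.sin_two_mul, hsin, hcos]
  have hE1 : Complex.exp (Complex.I * ((Real.pi - 2*γ : ℝ) : ℂ))
      = -((t:ℂ) - Complex.I*(s:ℂ))^2 := by
    rw [mul_comm, Complex.exp_mul_I, ← Complex.ofReal_cos, ← Complex.ofReal_sin,
      hrc1, hrs1]
    push_cast
    linear_combination ((s:ℂ)^2) * Complex.I_sq
  have hrc2 : Real.cos (Real.pi + 2*γ) = s^2 - t^2 := by
    have : Real.pi + 2*γ = Real.pi - (-(2*γ)) := by ring
    rw [this, Real.cos_pi_sub, Real.cos_neg, Real.cos_two_mul', hsin, hcos]; ring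
  have hrs2 : Real.sin (Real.pi + 2*γ) = -(2*s*t) := by
    have : Real.pi + 2*γ = Real.pi - (-(2*γ)) := by ring
    rw [this, Real.sin_pi_sub, Real.sin_neg, Real.sin_two_mul, hsin, hcos]
  have hE2 : Complex.exp (Complex.I * ((Real.pi + 2*γ : ℝ) : ℂ))
      = -((t:ℂ) + Complex.I*(s:ℂ))^2 := by
    rw [mul_comm, Complex.exp_mul_I, ← Complex.ofReal_cos, ← Complex.ofReal_sin,
      hrc2, hrs2]
    push_cast
    linear_combination ((s:ℂ)^2) * Complex.I_sq
  have hstC : ((s:ℂ))^2 + ((t:ℂ))^2 = 1 := by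
    have : s^2 + t^2 = 1 := by rw [ht2]; ring
    exact_mod_cast congrArg (Complex.ofReal) this
  have hφpn : ‖φp‖ = 1 := by
    have h1 : ‖φp‖^2 = 1 := by
      have := norm_sq_eq_re_inner (𝕜 := ℂ) φp
      rw [hpp] at this
      simpa using this
    rw [← Real.sqrt_sq (norm_nonneg φp), h1, Real.sqrt_one]
  have hEn : ‖Complex.exp (Complex.I * ((θp - θ + Real.pi/2 : ℝ) : ℂ))‖ = 1 := by
    rw [hE]
    rw [norm_mul, Complex.norm_I, one_mul, hB, Complex.norm_exp]
    simp
  set E := Complex.exp (Complex.I * ((θp - θ + Real.pi/2 : ℝ) : ℂ)) with hEdef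
  have hΦplus' : Φplus = ((Real.sqrt 2 : ℝ) : ℂ)⁻¹ • (φ + E • φp) := by
    rw [hΦplus, ← Complex.coe_smul, Complex.ofReal_inv]
  have hΦminus' : Φminus = ((Real.sqrt 2 : ℝ) : ℂ)⁻¹ • (φ - E • φp) := by
    rw [hΦminus, ← Complex.coe_smul, Complex.ofReal_inv]
  have hinner_p : ⟪φ, E • φp⟫_ℂ = 0 := by rw [inner_smul_right, hφp0, mul_zero]
  have hplusn : ‖φ + E • φp‖ = Real.sqrt 2 := by
    have hsq : ‖φ + E • φp‖^2 = 2 := by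
      rw [norm_add_sq (𝕜 := ℂ), hinner_p, norm_smul, hEn, hφpn, hφ]
      norm_num
    rw [← Real.sqrt_sq (norm_nonneg _), hsq]
  have hminusn : ‖φ - E • φp‖ = Real.sqrt 2 := by
    have hsq : ‖φ - E • φp‖^2 = 2 := by
      rw [norm_sub_sq (𝕜 := ℂ), hinner_p, norm_smul, hEn, hφpn, hφ]
      norm_num
    rw [← Real.sqrt_sq (norm_nonneg _), hsq]
  have hs2 : (0:ℝ) < Real.sqrt 2 := by positivity
  refine ⟨?_, ?_, ?_, ?_⟩
  · rw [hΦplus, norm_smul, hplusn, norm_inv, Real.norm_eq_abs,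
      abs_of_pos hs2, inv_mul_cancel₀ hs2.ne']
  · rw [hΦminus, norm_smul, hminusn, norm_inv, Real.norm_eq_abs,
      abs_of_pos hs2, inv_mul_cancel₀ hs2.ne']
  · rw [hΦplus']
    rw [hψ_eq]
    simp only [householder, smul_add, smul_sub, inner_add_left, inner_add_right,
      inner_sub_left, inner_sub_right, inner_smul_left, inner_smul_right,
      hφφ, hpp, hφp0, hpφ0, map_mul, map_inv₀, Complex.conj_ofReal,
      mul_one, mul_zero, zero_add, add_zero, zero_mul, one_mul]
    rw [hE1]
    match_scalars
    · rw [hE, hcA, map_mul, Complex.conj_ofReal, hAconj]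
      linear_combination ((Real.sqrt 2 : ℝ):ℂ)⁻¹ * hstC
        + ((Real.sqrt 2 : ℝ):ℂ)⁻¹ * (s:ℂ)^2 * Complex.I_sq
        + (2*((Real.sqrt 2 : ℝ):ℂ)⁻¹*(s:ℂ)^2 + 2*((Real.sqrt 2 : ℝ):ℂ)⁻¹*(s:ℂ)*(t:ℂ)*Complex.I) * hAB
    · rw [hE, hcA, map_mul, Complex.conj_ofReal, hAconj]
      linear_combination (-(((Real.sqrt 2 : ℝ):ℂ)⁻¹*B*Complex.I)) * hstC
        + (((Real.sqrt 2 : ℝ):ℂ)⁻¹*B*(Complex.I*(s:ℂ)^2 - 2*(s:ℂ)*(t:ℂ))) * Complex.I_sq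
  · rw [hΦminus']
    rw [hψ_eq]
    simp only [householder, smul_add, smul_sub, inner_add_left, inner_add_right,
      inner_sub_left, inner_sub_right, inner_smul_left, inner_smul_right,
      hφφ, hpp, hφp0, hpφ0, map_mul, map_inv₀, Complex.conj_ofReal,
      mul_one, mul_zero, zero_add, add_zero, zero_mul, one_mul]
    rw [hE2]
    match_scalars
    · rw [hE, hcA, map_mul, Complex.conj_ofReal, hAconj]
      linear_combination ((Real.sqrt 2 : ℝ):ℂ)⁻¹ * hstC
        + ((Real.sqrt 2 : ℝ):ℂ)⁻¹ * (s:ℂ)^2 * Complex.I_sq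
        + (2*((Real.sqrt 2 : ℝ):ℂ)⁻¹*(s:ℂ)^2 - 2*((Real.sqrt 2 : ℝ):ℂ)⁻¹*(s:ℂ)*(t:ℂ)*Complex.I) * hAB
    · rw [hE, hcA, map_mul, Complex.conj_ofReal, hAconj]
      linear_combination (((Real.sqrt 2 : ℝ):ℂ)⁻¹*B*Complex.I) * hstC
        + (-(((Real.sqrt 2 : ℝ):ℂ)⁻¹*B*(Complex.I*(s:ℂ)^2 + 2*(s:ℂ)*(t:ℂ)))) * Complex.I_sq
end

section
/- Let |φ⟩, |ψ⟩ be unit vectors with |⟨φ|ψ⟩| ≠ 1, γ = arcsin(|⟨φ|ψ⟩|), θ = arg(⟨φ|ψ⟩), θ⊥ = arg(⟨φ⊥|ψ⟩), and R_φ, R_ψ the Householder reflections about |φ⟩ and |ψ⟩. Then R_φ R_ψ |φ⟩ = −cos(2γ)|φ⟩ − e^{i(θ⊥−θ)} sin(2γ)|φ⊥⟩. -/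
open scoped InnerProductSpace

/-- Action of the product of two Householder reflections on `φ`. -/
theorem householder_product_apply_phi {d : ℕ}
    (φ ψ : EuclideanSpace ℂ (Fin d)) (hφ : ‖φ‖ = 1) (hψ : ‖ψ‖ = 1)
    (h : ‖⟪φ, ψ⟫_ℂ‖ ≠ 1)
    (φp : EuclideanSpace ℂ (Fin d))
    (hφp : φp = ‖ψ - ⟪φ, ψ⟫_ℂ • φ‖⁻¹ • (ψ - ⟪φ, ψ⟫_ℂ • φ))
    (γ θ θp : ℝ)
    (hγ : γ = Real.arcsin ‖⟪φ, ψ⟫_ℂ‖)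
    (hθ : θ = (⟪φ, ψ⟫_ℂ).arg) (hθp : θp = (⟪φp, ψ⟫_ℂ).arg) :
    householder φ (householder ψ φ) =
      (-(Real.cos (2 * γ)) : ℂ) • φ
        - (Complex.exp (Complex.I * (θp - θ : ℝ)) * (Real.sin (2 * γ) : ℂ)) • φp := by
  set c : ℂ := ⟪φ, ψ⟫_ℂ with hc
  set s : ℝ := ‖ψ - c • φ‖ with hs
  have hφφ : ⟪φ, φ⟫_ℂ = 1 := by
    rw [inner_self_eq_norm_sq_to_K, hφ]; norm_num
  have hψψ : ⟪ψ, ψ⟫_ℂ = 1 := by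
    rw [inner_self_eq_norm_sq_to_K, hψ]; norm_num
  have hψφ : ⟪ψ, φ⟫_ℂ = starRingEnd ℂ c := by rw [← inner_conj_symm]
  have hcs : ‖c‖ < 1 := by
    refine lt_of_le_of_ne ?_ h
    calc ‖c‖ ≤ ‖φ‖ * ‖ψ‖ := norm_inner_le_norm φ ψ
    _ = 1 := by rw [hφ, hψ]; ring
  have hs2C : ((s : ℂ)) ^ 2 = 1 - starRingEnd ℂ c * c := by
    have h0 : ⟪ψ - c • φ, ψ - c • φ⟫_ℂ = ((s : ℝ) : ℂ) ^ 2 := by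
      exact_mod_cast inner_self_eq_norm_sq_to_K (𝕜 := ℂ) (ψ - c • φ)
    simp only [inner_sub_left, inner_sub_right, inner_smul_left, inner_smul_right,
      hφφ, hψψ, hψφ, ← hc] at h0
    linear_combination -h0
  have hcc : starRingEnd ℂ c * c = ((‖c‖ ^ 2 : ℝ) : ℂ) := by
    rw [mul_comm, Complex.mul_conj, Complex.normSq_eq_norm_sq]
  have hs2 : s ^ 2 = 1 - ‖c‖ ^ 2 := by
    have : ((s ^ 2 : ℝ) : ℂ) = ((1 - ‖c‖ ^ 2 : ℝ) : ℂ) := by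
      push_cast; rw [hs2C, hcc]; push_cast; ring
    exact_mod_cast this
  have hspos : 0 < s := by
    have h1 : 0 < s ^ 2 := by nlinarith [norm_nonneg c]
    have h2 := norm_nonneg (ψ - c • φ)
    rw [← hs] at h2
    nlinarith
  have hψeq : ψ = c • φ + (s : ℂ) • φp := by
    rw [hφp]
    rw [show ((s⁻¹ : ℝ)) • (ψ - c • φ) = ((s⁻¹ : ℝ) : ℂ) • (ψ - c • φ) from rfl, smul_smul]
    push_cast
    rw [mul_inv_cancel₀ (by exact_mod_cast hspos.ne')]
    simp
  have hφpψ : ⟪φp, ψ⟫_ℂ = (s : ℂ) := by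
    rw [hφp]
    rw [show ((s⁻¹ : ℝ)) • (ψ - c • φ) = ((s⁻¹ : ℝ) : ℂ) • (ψ - c • φ) from rfl]
    rw [inner_smul_left]
    simp only [inner_sub_left, inner_smul_left, hψψ, hψφ]
    rw [← hc, Complex.conj_ofReal]
    have hx : (1 : ℂ) - starRingEnd ℂ c * c = (s : ℂ) ^ 2 := hs2C.symm
    have hsne : (s : ℂ) ≠ 0 := by exact_mod_cast hspos.ne'
    push_cast
    field_simp
    linear_combination hx
  have hθp0 : θp = 0 := by
    rw [hθp, hφpψ, Complex.arg_ofReal_of_nonneg hspos.le]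
  have hsinγ : Real.sin γ = ‖c‖ := by
    rw [hγ, Real.sin_arcsin (by linarith [norm_nonneg c]) hcs.le]
  have hcosγ : Real.cos γ = s := by
    rw [hγ, Real.cos_arcsin]
    rw [show (1 : ℝ) - ‖c‖ ^ 2 = s ^ 2 by linarith]
    exact Real.sqrt_sq hspos.le
  have hsc : (s : ℂ) ^ 2 = 1 - ((‖c‖ : ℝ) : ℂ) ^ 2 := by
    exact_mod_cast congrArg Complex.ofReal hs2
  have e1 : -((Real.cos (2 * γ) : ℝ) : ℂ) = 2 * starRingEnd ℂ c * c - 1 := by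
    rw [Real.cos_two_mul, hcosγ]
    push_cast at hcc ⊢
    linear_combination (-2 : ℂ) * hsc - 2 * hcc
  have e2 : Complex.exp (Complex.I * ((θp - θ : ℝ) : ℂ)) * ((Real.sin (2 * γ) : ℝ) : ℂ)
      = 2 * starRingEnd ℂ c * (s : ℂ) := by
    rw [hθp0, Real.sin_two_mul, hsinγ, hcosγ, hθ]
    have hconj : starRingEnd ℂ c = ((‖c‖ : ℝ) : ℂ) * Complex.exp (-(c.arg) * Complex.I) := by
      conv_lhs => rw [← Complex.norm_mul_exp_arg_mul_I c]
      rw [map_mul, ← Complex.exp_conj]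
      simp [Complex.conj_ofReal, Complex.conj_I]
    rw [hconj]
    push_cast
    rw [show Complex.I * (0 - (c.arg : ℂ)) = -(c.arg : ℂ) * Complex.I by ring]
    ring
  rw [e1, e2]
  simp only [householder, inner_sub_right, inner_smul_right, hφφ, hψφ, ← hc]
  rw [hψeq]
  module
end

section
/- Let |φ⟩, |ψ⟩ be unit vectors with |⟨φ|ψ⟩| ≠ 1, γ = arcsin(|⟨φ|ψ⟩|), θ = arg(⟨φ|ψ⟩), θ⊥ = arg(⟨φ⊥|ψ⟩), and R_φ, R_ψ the Householder reflections. Then R_φ R_ψ |φ⊥⟩ = e^{i(θ−θ⊥)} sin(2γ)|φ⟩ − cos(2γ)|φ⊥⟩. -/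
open scoped InnerProductSpace

/-- Action of the product of two Householder reflections on `φ⊥`. -/
theorem householder_product_apply_phiPerp {d : ℕ}
    (φ ψ : EuclideanSpace ℂ (Fin d)) (hφ : ‖φ‖ = 1) (hψ : ‖ψ‖ = 1)
    (h : ‖⟪φ, ψ⟫_ℂ‖ ≠ 1)
    (φp : EuclideanSpace ℂ (Fin d))
    (hφp : φp = ‖ψ - ⟪φ, ψ⟫_ℂ • φ‖⁻¹ • (ψ - ⟪φ, ψ⟫_ℂ • φ))
    (γ θ θp : ℝ)
    (hγ : γ = Real.arcsin ‖⟪φ, ψ⟫_ℂ‖)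
    (hθ : θ = (⟪φ, ψ⟫_ℂ).arg) (hθp : θp = (⟪φp, ψ⟫_ℂ).arg) :
    householder φ (householder ψ φp) =
      (Complex.exp (Complex.I * (θ - θp : ℝ)) * (Real.sin (2 * γ) : ℂ)) • φ
        - ((Real.cos (2 * γ)) : ℂ) • φp := by
  set c : ℂ := ⟪φ, ψ⟫_ℂ with hc
  have hcle : ‖c‖ ≤ 1 := by
    simpa [hφ, hψ] using norm_inner_le_norm (𝕜 := ℂ) φ ψ
  have hc1 : ‖c‖ < 1 := lt_of_le_of_ne hcle h
  set s : ℝ := ‖ψ - c • φ‖ with hs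
  have hsm : ∀ (r : ℝ) (x : EuclideanSpace ℂ (Fin d)), r • x = (r:ℂ) • x :=
    fun r x => (Complex.coe_smul r x).symm
  have hφφ : ⟪φ, φ⟫_ℂ = 1 := by
    rw [inner_self_eq_norm_sq_to_K, hφ]; norm_num
  have hψψ : ⟪ψ, ψ⟫_ℂ = 1 := by
    rw [inner_self_eq_norm_sq_to_K, hψ]; norm_num
  have hψφ : ⟪ψ, φ⟫_ℂ = starRingEnd ℂ c := by
    rw [hc, ← inner_conj_symm]
  have hs2 : s ^ 2 = 1 - ‖c‖ ^ 2 := by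
    have h1 : ‖ψ - c • φ‖ ^ 2 = ‖ψ‖ ^ 2 - 2 * Complex.re ⟪ψ, c • φ⟫_ℂ + ‖c • φ‖ ^ 2 :=
      norm_sub_sq (𝕜 := ℂ) ψ (c • φ)
    have h2 : ⟪ψ, c • φ⟫_ℂ = c * starRingEnd ℂ c := by
      rw [inner_smul_right, hψφ]
    rw [hs, h1, h2, Complex.mul_conj, norm_smul, hφ, hψ, Complex.ofReal_re,
      Complex.normSq_eq_norm_sq]
    ring
  have hs0 : 0 ≤ s := norm_nonneg _
  have hspos : 0 < s := by
    rcases hs0.lt_or_eq with h' | h'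
    · exact h'
    · exfalso
      have h1 : (1:ℝ) - ‖c‖^2 = 0 := by rw [← hs2, ← h']; ring
      nlinarith [norm_nonneg c]
  have hsne : s ≠ 0 := ne_of_gt hspos
  have hφp' : φp = ((s⁻¹ : ℝ) : ℂ) • (ψ - c • φ) := by
    rw [hφp]; exact hsm _ _
  -- inner products with φp
  have hφpψ' : ⟪φ, ψ - c • φ⟫_ℂ = 0 := by
    rw [inner_sub_right, inner_smul_right, hφφ, mul_one, ← hc, sub_self]
  have hinner_φ_φp : ⟪φ, φp⟫_ℂ = 0 := by
    rw [hφp', inner_smul_right, hφpψ', mul_zero]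
  have hψsub : ⟪ψ, ψ - c • φ⟫_ℂ = (s:ℂ)^2 := by
    rw [inner_sub_right, inner_smul_right, hψψ, hψφ, Complex.mul_conj]
    rw [Complex.normSq_eq_norm_sq]
    norm_cast
    linarith [hs2]
  have hinner_ψ_φp : ⟪ψ, φp⟫_ℂ = (s:ℂ) := by
    rw [hφp', inner_smul_right, hψsub]
    have : (s:ℂ) ≠ 0 := by exact_mod_cast hsne
    push_cast
    field_simp
  have hinner_φp_ψ : ⟪φp, ψ⟫_ℂ = (s:ℂ) := by
    rw [← inner_conj_symm, hinner_ψ_φp, Complex.conj_ofReal]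
  -- θp = 0
  have hθp0 : θp = 0 := by
    rw [hθp, hinner_φp_ψ, Complex.arg_ofReal_of_nonneg hs0]
  -- decomposition of ψ
  have hψdecomp : ψ = c • φ + (s:ℂ) • φp := by
    rw [hφp', smul_smul]
    have : (s:ℂ) * ((s⁻¹:ℝ):ℂ) = 1 := by
      have hne : (s:ℂ) ≠ 0 := by exact_mod_cast hsne
      push_cast; field_simp
    rw [this, one_smul]
    abel
  -- scalar identities
  have hsqrt : Real.sqrt (1 - ‖c‖^2) = s := by
    rw [← hs2]; exact Real.sqrt_sq hs0
  have hsin : Real.sin γ = ‖c‖ := by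
    rw [hγ, Real.sin_arcsin (by linarith [norm_nonneg c]) hcle]
  have hcos : Real.cos γ = s := by
    rw [hγ, Real.cos_arcsin, hsqrt]
  have habs : ((‖c‖:ℝ):ℂ) * Complex.exp (Complex.I * (c.arg : ℂ)) = c := by
    rw [mul_comm Complex.I]
    exact Complex.norm_mul_exp_arg_mul_I c
  have hA : Complex.exp (Complex.I * ((θ - θp : ℝ):ℂ)) * (Real.sin (2*γ) : ℂ)
      = 2 * s * c := by
    rw [hθp0, hθ, Real.sin_two_mul, hsin, hcos]
    push_cast
    rw [sub_zero]
    rw [show (2:ℂ) * ‖c‖ * s = 2 * s * ‖c‖ by ring, mul_comm]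
    rw [mul_assoc, habs]
  have hB : ((Real.cos (2*γ) : ℝ) : ℂ) = 2 * (s:ℂ)^2 - 1 := by
    rw [Real.cos_two_mul, hcos]; push_cast; ring
  -- compute
  have step1 : householder ψ φp = φp - ((2:ℂ) * s) • ψ := by
    rw [householder, hinner_ψ_φp, smul_smul]
  have step2 : householder φ (φp - ((2:ℂ) * s) • ψ)
      = φp - ((2:ℂ) * s) • ψ + ((4:ℂ) * s * c) • φ := by
    rw [householder, inner_sub_right, inner_smul_right, hinner_φ_φp, ← hc]
    rw [zero_sub, smul_smul]
    push_cast
    module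
  rw [step1, step2, hA, hB]
  rw [hψdecomp]
  module
end

section
/- Let γ ∈ [0, π/2] and let γ̃ ∈ [0,1) be a real number satisfying min{|γ̃ − (1/2 + γ/π)|, 1 − |γ̃ − (1/2 + γ/π)|} < δ for some δ ∈ (0,1). Then | |cos(πγ̃ − π/2)| − cos(γ) | < πδ. -/
lemma sin_lip (a b : ℝ) : |Real.sin a - Real.sin b| ≤ |a - b| := by
  rw [Real.sin_sub_sin]
  have h1 : |Real.sin ((a - b) / 2)| ≤ |(a - b) / 2| := Real.abs_sin_le_abs
  have h2 : |Real.cos ((a + b) / 2)| ≤ 1 := Real.abs_cos_le_one _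
  calc |2 * Real.sin ((a - b) / 2) * Real.cos ((a + b) / 2)|
      = 2 * |Real.sin ((a - b) / 2)| * |Real.cos ((a + b) / 2)| := by
        rw [abs_mul, abs_mul, abs_two]
    _ ≤ 2 * |(a - b) / 2| * 1 := by
        apply mul_le_mul _ h2 (abs_nonneg _) (by positivity)
        nlinarith [abs_nonneg ((a-b)/2)]
    _ = |a - b| := by rw [abs_div]; simp [abs_of_pos]; ring

/-- Phase-estimation error analysis for the trace-distance (cosine) estimate. -/
theorem cos_estimate_error (γ γt δ : ℝ)
    (hγ : γ ∈ Set.Icc 0 (Real.pi / 2)) (hγt : γt ∈ Set.Ico (0 : ℝ) 1)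
    (hδ : δ ∈ Set.Ioo (0 : ℝ) 1)
    (hclose : min |γt - (1 / 2 + γ / Real.pi)| (1 - |γt - (1 / 2 + γ / Real.pi)|) < δ) :
    |(|Real.cos (Real.pi * γt - Real.pi / 2)| - Real.cos γ)| < Real.pi * δ := by
  obtain ⟨hγ0, hγ1⟩ := hγ
  obtain ⟨ht0, ht1⟩ := hγt
  have hπ : (0:ℝ) < Real.pi := Real.pi_pos
  set c : ℝ := 1 / 2 + γ / Real.pi with hc
  clear_value c
  have hc12 : (1:ℝ)/2 ≤ c := by
    have : 0 ≤ γ / Real.pi := div_nonneg hγ0 hπ.le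
    simp [hc]; linarith
  have hc1 : c ≤ 1 := by
    have : γ / Real.pi ≤ 1/2 := by
      rw [div_le_iff₀ hπ]; linarith
    simp [hc]; linarith
  -- rewrite cos(πγt - π/2) = sin(πγt)
  rw [Real.cos_sub_pi_div_two]
  have hs1 : 0 ≤ Real.sin (Real.pi * γt) := by
    apply Real.sin_nonneg_of_nonneg_of_le_pi
    · positivity
    · nlinarith
  have hcosγ : Real.cos γ = Real.sin (Real.pi * c) := by
    have : Real.pi * c = γ + Real.pi / 2 := by
      field_simp [hc]
      have h' : Real.pi * (γ / Real.pi) = γ := by field_simp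
      linear_combination (2 * Real.pi) * hc + 2 * h'
    rw [this, Real.sin_add_pi_div_two]
  have hs2 : 0 ≤ Real.sin (Real.pi * c) := by
    apply Real.sin_nonneg_of_nonneg_of_le_pi
    · positivity
    · nlinarith
  rw [abs_of_nonneg hs1, hcosγ]
  rcases min_lt_iff.mp hclose with h | h
  · -- direct case
    have := sin_lip (Real.pi * γt) (Real.pi * c)
    have h2 : |Real.pi * γt - Real.pi * c| = Real.pi * |γt - c| := by
      rw [← mul_sub, abs_mul, abs_of_pos hπ]
    have : |Real.sin (Real.pi * γt) - Real.sin (Real.pi * c)| < Real.pi * δ := by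
      calc |Real.sin (Real.pi * γt) - Real.sin (Real.pi * c)|
          ≤ Real.pi * |γt - c| := by rw [← h2]; exact sin_lip _ _
        _ < Real.pi * δ := by exact (mul_lt_mul_iff_right₀ hπ).mpr h
    exact this
  · -- wraparound case
    rcases le_or_gt γt c with hle | hlt
    · have habs : |γt - c| = c - γt := by rw [abs_of_nonpos (by linarith)]; ring
      rw [habs] at h
      have hkey : |Real.sin (Real.pi * (γt + 1)) - Real.sin (Real.pi * c)| < Real.pi * δ := by
        calc |Real.sin (Real.pi * (γt + 1)) - Real.sin (Real.pi * c)|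
            ≤ |Real.pi * (γt + 1) - Real.pi * c| := sin_lip _ _
          _ = Real.pi * |γt + 1 - c| := by
              rw [show Real.pi * (γt + 1) - Real.pi * c = Real.pi * (γt + 1 - c) by ring,
                abs_mul, abs_of_pos hπ]
          _ < Real.pi * δ := by
              apply (mul_lt_mul_iff_right₀ hπ).mpr
              rw [abs_of_nonneg (by linarith)]; linarith
      have hsin : Real.sin (Real.pi * (γt + 1)) = -Real.sin (Real.pi * γt) := by
        rw [show Real.pi * (γt + 1) = Real.pi * γt + Real.pi by ring, Real.sin_add_pi]
      rw [hsin] at hkey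
      rw [abs_of_nonpos (by linarith : -Real.sin (Real.pi * γt) - Real.sin (Real.pi * c) ≤ 0)] at hkey
      rw [abs_lt]; constructor <;> linarith
    · have habs : |γt - c| = γt - c := abs_of_pos (by linarith)
      rw [habs] at h
      have hkey : |Real.sin (Real.pi * (γt - 1)) - Real.sin (Real.pi * c)| < Real.pi * δ := by
        calc |Real.sin (Real.pi * (γt - 1)) - Real.sin (Real.pi * c)|
            ≤ |Real.pi * (γt - 1) - Real.pi * c| := sin_lip _ _
          _ = Real.pi * |γt - 1 - c| := by
              rw [show Real.pi * (γt - 1) - Real.pi * c = Real.pi * (γt - 1 - c) by ring,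
                abs_mul, abs_of_pos hπ]
          _ < Real.pi * δ := by
              apply (mul_lt_mul_iff_right₀ hπ).mpr
              rw [abs_of_nonpos (by linarith [div_nonneg hγ0 hπ.le])]; linarith
      have hsin : Real.sin (Real.pi * (γt - 1)) = -Real.sin (Real.pi * γt) := by
        rw [show Real.pi * (γt - 1) = Real.pi * γt - Real.pi by ring, Real.sin_sub_pi]
      rw [hsin] at hkey
      rw [abs_of_nonpos (by linarith : -Real.sin (Real.pi * γt) - Real.sin (Real.pi * c) ≤ 0)] at hkey
      rw [abs_lt]; constructor <;> linarith
end

section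
/- Let |φ⟩, |ψ⟩ be unit vectors with 0 < |⟨φ|ψ⟩| < 1, and let R_φ, R_ψ be the Householder reflections about them. Then the product R_φR_ψ restricted to the two-dimensional subspace span{|φ⟩, |ψ⟩} has eigenvalues e^{i(π−2γ)} and e^{i(π+2γ)} where γ = arcsin(|⟨φ|ψ⟩|); in particular its trace on this subspace equals −2cos(2γ). -/
open scoped InnerProductSpace

set_option maxHeartbeats 1000000 in
/-- On the two-dimensional subspace `span{φ, ψ}`, the product `R_φ R_ψ` has an orthonormal
eigenbasis with eigenvalues `e^{i(π − 2γ)}` and `e^{i(π + 2γ)}`, whose sum (the trace on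
this subspace) equals `−2 cos(2γ)`, where `γ = arcsin |⟨φ|ψ⟩|`. -/
theorem householder_product_eigenvalues_on_span {d : ℕ}
    (φ ψ : EuclideanSpace ℂ (Fin d)) (hφ : ‖φ‖ = 1) (hψ : ‖ψ‖ = 1)
    (h0 : 0 < ‖⟪φ, ψ⟫_ℂ‖) (h1 : ‖⟪φ, ψ⟫_ℂ‖ < 1)
    (γ : ℝ) (hγ : γ = Real.arcsin ‖⟪φ, ψ⟫_ℂ‖) :
    ∃ Φplus Φminus : EuclideanSpace ℂ (Fin d),
      ‖Φplus‖ = 1 ∧ ‖Φminus‖ = 1 ∧ ⟪Φplus, Φminus⟫_ℂ = 0 ∧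
      Submodule.span ℂ {Φplus, Φminus} = Submodule.span ℂ {φ, ψ} ∧
      householder φ (householder ψ Φplus) =
        Complex.exp (Complex.I * (Real.pi - 2 * γ : ℝ)) • Φplus ∧
      householder φ (householder ψ Φminus) =
        Complex.exp (Complex.I * (Real.pi + 2 * γ : ℝ)) • Φminus ∧
      Complex.exp (Complex.I * (Real.pi - 2 * γ : ℝ)) +
        Complex.exp (Complex.I * (Real.pi + 2 * γ : ℝ)) =
          (-(2 * Real.cos (2 * γ)) : ℝ) := by
  classical
  set c : ℂ := ⟪φ, ψ⟫_ℂ with hc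
  set K : ℂ := (starRingEnd ℂ) c with hK
  set S : ℝ := Real.sin γ with hSdef
  set C : ℝ := Real.cos γ with hCdef
  have hS : S = ‖c‖ := by
    rw [hSdef, hγ]; exact Real.sin_arcsin (by linarith) (le_of_lt h1)
  have hSpos : 0 < S := hS ▸ h0
  have hCpos : 0 < C := by
    rw [hCdef, hγ, Real.cos_arcsin]
    apply Real.sqrt_pos.2
    nlinarith
  have hpyth : S ^ 2 + C ^ 2 = 1 := Real.sin_sq_add_cos_sq γ
  have hSne : ((S : ℝ) : ℂ) ≠ 0 := by exact_mod_cast hSpos.ne'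
  have hCne : ((C : ℝ) : ℂ) ≠ 0 := by exact_mod_cast hCpos.ne'
  have hpythC : ((S : ℝ) : ℂ) ^ 2 + ((C : ℝ) : ℂ) ^ 2 = 1 := by exact_mod_cast hpyth
  have hcK : c * K = ((S : ℝ) : ℂ) ^ 2 := by
    rw [hK, Complex.mul_conj, hS]
    rw [Complex.normSq_eq_norm_sq]
    push_cast
    rfl
  have hcne : c ≠ 0 := by
    intro h
    rw [h] at h0
    simp at h0
  have hKne : K ≠ 0 := by
    rw [hK]
    simpa using hcne
  have hφφ : ⟪φ, φ⟫_ℂ = 1 := by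
    rw [inner_self_eq_norm_sq_to_K, hφ]; norm_num
  have hψψ : ⟪ψ, ψ⟫_ℂ = 1 := by
    rw [inner_self_eq_norm_sq_to_K, hψ]; norm_num
  have hψφ : ⟪ψ, φ⟫_ℂ = K := by rw [hK, hc, inner_conj_symm]
  set χ : EuclideanSpace ℂ (Fin d) := (((C : ℝ) : ℂ))⁻¹ • (ψ - c • φ) with hχ
  have hχdef : (((C : ℝ) : ℂ)) • χ = ψ - c • φ := smul_inv_smul₀ hCne _
  have hψdecomp : ψ = c • φ + ((C : ℝ) : ℂ) • χ := by
    rw [hχdef]; abel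
  have hφχ : ⟪φ, χ⟫_ℂ = 0 := by
    rw [hχ, inner_smul_right, inner_sub_right, inner_smul_right, hφφ, ← hc]
    ring
  have hχφ : ⟪χ, φ⟫_ℂ = 0 := by
    rw [← inner_conj_symm, hφχ, map_zero]
  have hχχ : ⟪χ, χ⟫_ℂ = 1 := by
    have hsub : ⟪ψ - c • φ, ψ - c • φ⟫_ℂ = 1 - c * K := by
      rw [inner_sub_left, inner_sub_right, inner_sub_right, inner_smul_left,
        inner_smul_right, inner_smul_left, inner_smul_right, hψψ, hψφ, hφφ, ← hc, ← hK]
      ring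
    rw [hχ, inner_smul_left, inner_smul_right, hsub, hcK, map_inv₀, Complex.conj_ofReal]
    field_simp
    linear_combination -hpythC
  have hχψ : ⟪χ, ψ⟫_ℂ = ((C : ℝ) : ℂ) := by
    rw [hψdecomp, inner_add_right, inner_smul_right, inner_smul_right, hχφ, hχχ]
    ring
  have hψχ : ⟪ψ, χ⟫_ℂ = ((C : ℝ) : ℂ) := by
    rw [← inner_conj_symm, hχψ, Complex.conj_ofReal]
  -- key computation
  have hφcombo : ∀ a b : ℂ, ⟪φ, a • φ + b • χ⟫_ℂ = a := by
    intro a b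
    rw [inner_add_right, inner_smul_right, inner_smul_right, hφφ, hφχ]; ring
  have hψcombo : ∀ a b : ℂ, ⟪ψ, a • φ + b • χ⟫_ℂ = a * K + b * ((C : ℝ) : ℂ) := by
    intro a b
    rw [inner_add_right, inner_smul_right, inner_smul_right, hψφ, hψχ]
  have hkey : ∀ a b : ℂ, householder φ (householder ψ (a • φ + b • χ)) =
      (-a + 2 * c * (a * K + b * ((C : ℝ) : ℂ))) • φ +
      (b - 2 * ((C : ℝ) : ℂ) * (a * K + b * ((C : ℝ) : ℂ))) • χ := by
    intro a b
    have e1 : householder ψ (a • φ + b • χ) =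
        (a - 2 * c * (a * K + b * ((C : ℝ) : ℂ))) • φ +
        (b - 2 * ((C : ℝ) : ℂ) * (a * K + b * ((C : ℝ) : ℂ))) • χ := by
      rw [householder, hψcombo a b]
      nth_rewrite 1 [hψdecomp]
      module
    rw [e1, householder, hφcombo]
    module
  have hinner : ∀ a b a' b' : ℂ,
      ⟪a • φ + b • χ, a' • φ + b' • χ⟫_ℂ =
        (starRingEnd ℂ) a * a' + (starRingEnd ℂ) b * b' := by
    intro a b a' b'
    simp only [inner_add_left, inner_add_right, inner_smul_left, inner_smul_right,
      hφφ, hχχ, hφχ, hχφ]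
    ring
  set r : ℂ := ((Real.sqrt 2 : ℝ) : ℂ)⁻¹ with hr
  have hsqrt2 : ((Real.sqrt 2 : ℝ) : ℂ) ≠ 0 := by
    have : (0:ℝ) < Real.sqrt 2 := Real.sqrt_pos.2 (by norm_num)
    exact_mod_cast this.ne'
  have hrr : (starRingEnd ℂ) r * r = 2⁻¹ := by
    have h2 : ((Real.sqrt 2 : ℝ) : ℂ) * ((Real.sqrt 2 : ℝ) : ℂ) = 2 := by
      norm_cast
      rw [Real.mul_self_sqrt (by norm_num : (0:ℝ) ≤ 2)]
    rw [hr, map_inv₀, Complex.conj_ofReal, ← mul_inv, h2]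
  set u : ℂ := Complex.I * K * (((S : ℝ) : ℂ))⁻¹ with hu
  have hucu : (starRingEnd ℂ) u * u = 1 := by
    rw [hu, map_mul, map_mul, map_inv₀, Complex.conj_I, Complex.conj_ofReal, hK,
      Complex.conj_conj]
    field_simp
    linear_combination hcK + (-(c * K)) * Complex.I_sq
  set Φp : EuclideanSpace ℂ (Fin d) := r • φ + (r * u) • χ with hΦp
  set Φm : EuclideanSpace ℂ (Fin d) := r • φ + (-(r * u)) • χ with hΦm
  have norm_of_inner_one : ∀ x : EuclideanSpace ℂ (Fin d), ⟪x, x⟫_ℂ = 1 → ‖x‖ = 1 := by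
    intro x hx
    have h2 := inner_self_eq_norm_sq (𝕜 := ℂ) x
    rw [hx] at h2
    simp at h2
    nlinarith [norm_nonneg x, h2]
  have hΦpnorm : ‖Φp‖ = 1 := by
    apply norm_of_inner_one
    rw [hΦp, hinner]
    simp only [map_mul, map_neg]
    linear_combination (1 + (starRingEnd ℂ) u * u) * hrr + 2⁻¹ * hucu
  have hΦmnorm : ‖Φm‖ = 1 := by
    apply norm_of_inner_one
    rw [hΦm, hinner]
    simp only [map_mul, map_neg]
    linear_combination (1 + (starRingEnd ℂ) u * u) * hrr + 2⁻¹ * hucu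
  have hΦorth : ⟪Φp, Φm⟫_ℂ = 0 := by
    rw [hΦp, hΦm, hinner]
    simp only [map_mul, map_neg]
    linear_combination (1 - (starRingEnd ℂ) u * u) * hrr - 2⁻¹ * hucu
  -- eigenvalues
  have hlp : Complex.exp (Complex.I * ((Real.pi - 2 * γ : ℝ) : ℂ)) =
      -(((C : ℝ) : ℂ) ^ 2 - ((S : ℝ) : ℂ) ^ 2) +
      2 * ((S : ℝ) : ℂ) * ((C : ℝ) : ℂ) * Complex.I := by
    rw [mul_comm Complex.I, Complex.exp_mul_I, ← Complex.ofReal_cos, ← Complex.ofReal_sin,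
      Real.cos_pi_sub, Real.sin_pi_sub, Real.cos_two_mul', Real.sin_two_mul, ← hSdef, ← hCdef]
    push_cast
    ring
  have hlm : Complex.exp (Complex.I * ((Real.pi + 2 * γ : ℝ) : ℂ)) =
      -(((C : ℝ) : ℂ) ^ 2 - ((S : ℝ) : ℂ) ^ 2) -
      2 * ((S : ℝ) : ℂ) * ((C : ℝ) : ℂ) * Complex.I := by
    rw [mul_comm Complex.I, Complex.exp_mul_I, ← Complex.ofReal_cos, ← Complex.ofReal_sin]
    have h1 : Real.cos (Real.pi + 2 * γ) = -Real.cos (2 * γ) := by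
      rw [Real.cos_add]; simp
    have h2 : Real.sin (Real.pi + 2 * γ) = -Real.sin (2 * γ) := by
      rw [Real.sin_add]; simp
    rw [h1, h2, Real.cos_two_mul', Real.sin_two_mul, ← hSdef, ← hCdef]
    push_cast
    ring
  refine ⟨Φp, Φm, hΦpnorm, hΦmnorm, hΦorth, ?_, ?_, ?_, ?_⟩
  · -- span equality
    have hune : u ≠ 0 := by
      intro h
      simp [h] at hucu
    have hrne : r ≠ 0 := inv_ne_zero hsqrt2
    have hχmem : χ ∈ Submodule.span ℂ ({φ, ψ} : Set (EuclideanSpace ℂ (Fin d))) := by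
      rw [Submodule.mem_span_pair]
      exact ⟨-(((C : ℝ) : ℂ))⁻¹ * c, (((C : ℝ) : ℂ))⁻¹, by rw [hχ]; module⟩
    have hφmem : φ ∈ Submodule.span ℂ ({φ, ψ} : Set (EuclideanSpace ℂ (Fin d))) :=
      Submodule.subset_span (by simp)
    apply le_antisymm
    · rw [Submodule.span_le]
      intro x hx
      rcases hx with h | h
      · subst h
        exact Submodule.add_mem _ (Submodule.smul_mem _ _ hφmem) (Submodule.smul_mem _ _ hχmem)
      · simp only [Set.mem_singleton_iff] at h
        subst h
        exact Submodule.add_mem _ (Submodule.smul_mem _ _ hφmem) (Submodule.smul_mem _ _ hχmem)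
    · rw [Submodule.span_le]
      have hφ' : φ ∈ Submodule.span ℂ ({Φp, Φm} : Set (EuclideanSpace ℂ (Fin d))) := by
        rw [Submodule.mem_span_pair]
        refine ⟨(2 * r)⁻¹, (2 * r)⁻¹, ?_⟩
        rw [hΦp, hΦm]
        match_scalars <;> field_simp [hrne, hune, hCne, hSne, hsqrt2, hKne, Complex.I_ne_zero] <;> ring
      have hχ' : χ ∈ Submodule.span ℂ ({Φp, Φm} : Set (EuclideanSpace ℂ (Fin d))) := by
        rw [Submodule.mem_span_pair]
        refine ⟨(2 * (r * u))⁻¹, -(2 * (r * u))⁻¹, ?_⟩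
        rw [hΦp, hΦm]
        match_scalars <;> field_simp [hrne, hune, hCne, hSne, hsqrt2, hKne, Complex.I_ne_zero] <;> ring
      intro x hx
      rcases hx with h | h
      · subst h; exact hφ'
      · simp only [Set.mem_singleton_iff] at h
        subst h
        rw [hψdecomp]
        exact Submodule.add_mem _ (Submodule.smul_mem _ _ hφ') (Submodule.smul_mem _ _ hχ')
  · -- eigenvector plus
    rw [hΦp, hkey, hlp]
    have ha : -r + 2 * c * (r * K + r * u * ((C : ℝ) : ℂ)) =
        (-(((C : ℝ) : ℂ) ^ 2 - ((S : ℝ) : ℂ) ^ 2) +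
          2 * ((S : ℝ) : ℂ) * ((C : ℝ) : ℂ) * Complex.I) * r := by
      rw [hu]
      field_simp
      linear_combination (r*(2*((S:ℝ):ℂ)+2*Complex.I*((C:ℝ):ℂ))) * hcK + (r*((S:ℝ):ℂ)) * hpythC
    have hb : r * u - 2 * ((C : ℝ) : ℂ) * (r * K + r * u * ((C : ℝ) : ℂ)) =
        (-(((C : ℝ) : ℂ) ^ 2 - ((S : ℝ) : ℂ) ^ 2) +
          2 * ((S : ℝ) : ℂ) * ((C : ℝ) : ℂ) * Complex.I) * (r * u) := by
      rw [hu]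
      linear_combination (-(r*Complex.I*K*((S:ℝ):ℂ)⁻¹)) * hpythC + (-(2*((C:ℝ):ℂ)*r*K*((S:ℝ):ℂ)*((S:ℝ):ℂ)⁻¹)) * Complex.I_sq + (2*((C:ℝ):ℂ)*r*K) * (mul_inv_cancel₀ hSne)
    rw [ha, hb]
    module
  · -- eigenvector minus
    rw [hΦm, hkey, hlm]
    have ha : -r + 2 * c * (r * K + -(r * u) * ((C : ℝ) : ℂ)) =
        (-(((C : ℝ) : ℂ) ^ 2 - ((S : ℝ) : ℂ) ^ 2) -
          2 * ((S : ℝ) : ℂ) * ((C : ℝ) : ℂ) * Complex.I) * r := by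
      rw [hu]
      field_simp
      linear_combination (r*(2*((S:ℝ):ℂ)-2*Complex.I*((C:ℝ):ℂ))) * hcK + (r*((S:ℝ):ℂ)) * hpythC
    have hb : -(r * u) - 2 * ((C : ℝ) : ℂ) * (r * K + -(r * u) * ((C : ℝ) : ℂ)) =
        (-(((C : ℝ) : ℂ) ^ 2 - ((S : ℝ) : ℂ) ^ 2) -
          2 * ((S : ℝ) : ℂ) * ((C : ℝ) : ℂ) * Complex.I) * (-(r * u)) := by
      rw [hu]
      linear_combination (r*Complex.I*K*((S:ℝ):ℂ)⁻¹) * hpythC + (-(2*((C:ℝ):ℂ)*r*K*((S:ℝ):ℂ)*((S:ℝ):ℂ)⁻¹)) * Complex.I_sq + (2*((C:ℝ):ℂ)*r*K) * (mul_inv_cancel₀ hSne)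
    rw [ha, hb]
    module
  · -- trace
    rw [hlp, hlm, Real.cos_two_mul', ← hSdef, ← hCdef]
    push_cast
    ring
end
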